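/- Let U = [[A,B1,B2],[C1,D11,D12],[C2,D21,0]] : X0⊕U⊕Δ̃* → X0⊕Y⊕Δ̃ be the unitary colligation constructed from an AIP_S-admissible data set {P,T,E,N} via the Redheffer construction. Then Ker D21* = {0}, and Ker D12 equals the closure of i_* applied to the subspace { [x0; 0] : x0 ∈ X0, T* P^{1/2} x0 = 0 } of Δ*. -/
import Mathlib


open ContinuousLinearMap Metric
open scoped InnerProductSpace ComplexOrder

noncomputable section

/-- The de Branges–Rovnyak kernel `K_S(z,ζ) = (I − S(z)S(ζ)*)/(1 − z ζ̄)`. -/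
def dbrKernel {U Y : Type*}
    [NormedAddCommGroup U] [InnerProductSpace ℂ U] [CompleteSpace U]
    [NormedAddCommGroup Y] [InnerProductSpace ℂ Y] [CompleteSpace Y]
    (S : ℂ → (U →L[ℂ] Y)) (z ζ : ℂ) : Y →L[ℂ] Y :=
  (1 - z * (starRingEnd ℂ) ζ)⁻¹ • (1 - (S z) ∘L (adjoint (S ζ)))

/-- The operator-valued Schur class on the unit disk. -/
def IsSchur {U Y : Type*}
    [NormedAddCommGroup U] [NormedSpace ℂ U]
    [NormedAddCommGroup Y] [NormedSpace ℂ Y]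
    (S : ℂ → (U →L[ℂ] Y)) : Prop :=
  AnalyticOnNhd ℂ S (ball (0:ℂ) 1) ∧ ∀ z ∈ ball (0:ℂ) 1, ‖S z‖ ≤ 1

/-- `H` (with realization map `J` and kernel elements `k`) is the reproducing kernel
Hilbert space of the de Branges–Rovnyak kernel `K_S`. -/
structure IsDBRSpace {U Y : Type*}
    [NormedAddCommGroup U] [InnerProductSpace ℂ U] [CompleteSpace U]
    [NormedAddCommGroup Y] [InnerProductSpace ℂ Y] [CompleteSpace Y]
    (S : ℂ → (U →L[ℂ] Y)) (H : Type*) [NormedAddCommGroup H]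
    [InnerProductSpace ℂ H] [CompleteSpace H]
    (J : H →ₗ[ℂ] (ℂ → Y)) (k : ℂ → Y → H) : Prop where
  ext : ∀ f g : H, (∀ z ∈ ball (0:ℂ) 1, J f z = J g z) → f = g
  kernel_eq : ∀ ζ ∈ ball (0:ℂ) 1, ∀ y : Y, ∀ z ∈ ball (0:ℂ) 1,
    J (k ζ y) z = dbrKernel S z ζ y
  reproducing : ∀ ζ ∈ ball (0:ℂ) 1, ∀ (y : Y) (f : H),
    ⟪k ζ y, f⟫_ℂ = ⟪y, J f ζ⟫_ℂ

/-- The rank-one operator `x x* : y ↦ ⟨y, x⟩ x`. -/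
def rankOne {X : Type*} [NormedAddCommGroup X] [InnerProductSpace ℂ X]
    (x : X) : X →L[ℂ] X :=
  (innerSL ℂ x).smulRight x

/-- A transfer-function block `z ↦ D + z C (I − zA)^{-1} B`. -/
def tblock {X0 V W : Type*}
    [NormedAddCommGroup X0] [NormedSpace ℂ X0] [CompleteSpace X0]
    [NormedAddCommGroup V] [NormedSpace ℂ V]
    [NormedAddCommGroup W] [NormedSpace ℂ W]
    (A : X0 →L[ℂ] X0) (B : V →L[ℂ] X0) (C : X0 →L[ℂ] W) (D : V →L[ℂ] W)
    (z : ℂ) : V →L[ℂ] W :=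
  D + z • (C ∘L (Ring.inverse (1 - z • A)) ∘L B)

/-- The Redheffer linear-fractional transform
`R_Σ[ℰ] = Σ11 + Σ12 (I − ℰ Σ22)^{-1} ℰ Σ21` associated with the colligation
`[[A,B1,B2],[C1,D11,D12],[C2,D21,0]]`. -/
def redheffer {U Y X0 Dt Ds : Type*}
    [NormedAddCommGroup U] [NormedSpace ℂ U]
    [NormedAddCommGroup Y] [NormedSpace ℂ Y]
    [NormedAddCommGroup X0] [NormedSpace ℂ X0] [CompleteSpace X0]
    [NormedAddCommGroup Dt] [NormedSpace ℂ Dt] [CompleteSpace Dt]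
    [NormedAddCommGroup Ds] [NormedSpace ℂ Ds] [CompleteSpace Ds]
    (A : X0 →L[ℂ] X0) (B1 : U →L[ℂ] X0) (B2 : Ds →L[ℂ] X0)
    (C1 : X0 →L[ℂ] Y) (C2 : X0 →L[ℂ] Dt)
    (D11 : U →L[ℂ] Y) (D12 : Ds →L[ℂ] Y) (D21 : U →L[ℂ] Dt)
    (ℰ : ℂ → (Dt →L[ℂ] Ds)) (z : ℂ) : U →L[ℂ] Y :=
  tblock A B1 C1 D11 z +
    (tblock A B2 C1 D12 z) ∘L
      (Ring.inverse (1 - (ℰ z) ∘L (tblock A B2 C2 0 z))) ∘L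
        ((ℰ z) ∘L (tblock A B1 C2 D21 z))

/-- The unitary colligation `U = [[A,B1,B2],[C1,D11,D12],[C2,D21,0]]` obtained from the
`AIP_S`-admissible data set `{P,T,E,N}` via the construction of the Abstract
Interpolation Problem: here `ρ : X → X0` plays the role of `P^{1/2} : X → X0` with
`X0 = closure Ran P^{1/2}` (so `ρ` has dense range and `ρ* ρ = P`), the block operator
is unitary, it implements the isometry `V [P^{1/2}x; Nx] = [P^{1/2}Tx; Ex]`, the third
input column is a unitary identification of `Δ̃*` with the defect space
`Δ* = (X0 ⊕ Y) ⊖ R_V`, and the adjoint of the third output row is a unitary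
identification of `Δ̃` with the defect space `Δ = (X0 ⊕ U) ⊖ D_V`. -/
structure IsRedhefferColligation
    {X U Y X0 Dt Ds : Type*}
    [NormedAddCommGroup X] [InnerProductSpace ℂ X] [CompleteSpace X]
    [NormedAddCommGroup U] [InnerProductSpace ℂ U] [CompleteSpace U]
    [NormedAddCommGroup Y] [InnerProductSpace ℂ Y] [CompleteSpace Y]
    [NormedAddCommGroup X0] [InnerProductSpace ℂ X0] [CompleteSpace X0]
    [NormedAddCommGroup Dt] [InnerProductSpace ℂ Dt] [CompleteSpace Dt]
    [NormedAddCommGroup Ds] [InnerProductSpace ℂ Ds] [CompleteSpace Ds]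
    (P T : X →L[ℂ] X) (E : X →L[ℂ] Y) (N : X →L[ℂ] U)
    (ρ : X →L[ℂ] X0)
    (A : X0 →L[ℂ] X0) (B1 : U →L[ℂ] X0) (B2 : Ds →L[ℂ] X0)
    (C1 : X0 →L[ℂ] Y) (C2 : X0 →L[ℂ] Dt)
    (D11 : U →L[ℂ] Y) (D12 : Ds →L[ℂ] Y) (D21 : U →L[ℂ] Dt) : Prop where
  rho_dense : DenseRange ρ
  rho_sq : adjoint ρ ∘L ρ = P
  isometric : ∀ (x0 : X0) (u : U) (d : Ds),
    ‖A x0 + B1 u + B2 d‖ ^ 2 + ‖C1 x0 + D11 u + D12 d‖ ^ 2 + ‖C2 x0 + D21 u‖ ^ 2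
      = ‖x0‖ ^ 2 + ‖u‖ ^ 2 + ‖d‖ ^ 2
  coisometric : ∀ (x0 : X0) (y : Y) (d : Dt),
    ‖adjoint A x0 + adjoint C1 y + adjoint C2 d‖ ^ 2
      + ‖adjoint B1 x0 + adjoint D11 y + adjoint D21 d‖ ^ 2
      + ‖adjoint B2 x0 + adjoint D12 y‖ ^ 2
      = ‖x0‖ ^ 2 + ‖y‖ ^ 2 + ‖d‖ ^ 2
  collig1 : ∀ x : X, A (ρ x) + B1 (N x) = ρ (T x)
  collig2 : ∀ x : X, C1 (ρ x) + D11 (N x) = E x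
  collig3 : ∀ x : X, C2 (ρ x) + D21 (N x) = 0
  defect_star : ∀ (d : Ds) (x : X), ⟪B2 d, ρ (T x)⟫_ℂ + ⟪D12 d, E x⟫_ℂ = 0
  defect_star_iso : ∀ d : Ds, ‖B2 d‖ ^ 2 + ‖D12 d‖ ^ 2 = ‖d‖ ^ 2
  defect_star_onto : ∀ (x0 : X0) (y : Y),
    (∀ x : X, ⟪x0, ρ (T x)⟫_ℂ + ⟪y, E x⟫_ℂ = 0) → ∃ d : Ds, B2 d = x0 ∧ D12 d = y
  defect : ∀ (d : Dt) (x : X), ⟪adjoint C2 d, ρ x⟫_ℂ + ⟪adjoint D21 d, N x⟫_ℂ = 0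
  defect_iso : ∀ d : Dt, ‖adjoint C2 d‖ ^ 2 + ‖adjoint D21 d‖ ^ 2 = ‖d‖ ^ 2
  defect_onto : ∀ (x0 : X0) (u : U),
    (∀ x : X, ⟪x0, ρ x⟫_ℂ + ⟪u, N x⟫_ℂ = 0) →
      ∃ d : Dt, adjoint C2 d = x0 ∧ adjoint D21 d = u


/-- Let `U = [[A,B1,B2],[C1,D11,D12],[C2,D21,0]]` be the unitary
colligation constructed from an `AIP_S`-admissible data set `{P,T,E,N}` via the
Redheffer construction.  Then `Ker D21* = {0}` and `Ker D12` equals the closure of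
`i_*` applied to the subspace `{[x0; 0] : x0 ∈ X0, T* P^{1/2} x0 = 0}` of `Δ*`
(recall `i_*^* = [B2; D12]`, so `i_* [x0; 0]` with `x0 ∈ Ker T*P^{1/2}` corresponds to
those `d ∈ Δ̃*` with `D12 d = 0` and `T* P^{1/2} (B2 d) = 0`; here `P^{1/2} : X0 → X`
is `ρ*`). -/
theorem stmt10
    {X U Y X0 Dt Ds : Type*}
    [NormedAddCommGroup X] [InnerProductSpace ℂ X] [CompleteSpace X]
    [NormedAddCommGroup U] [InnerProductSpace ℂ U] [CompleteSpace U]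
    [NormedAddCommGroup Y] [InnerProductSpace ℂ Y] [CompleteSpace Y]
    [NormedAddCommGroup X0] [InnerProductSpace ℂ X0] [CompleteSpace X0]
    [NormedAddCommGroup Dt] [InnerProductSpace ℂ Dt] [CompleteSpace Dt]
    [NormedAddCommGroup Ds] [InnerProductSpace ℂ Ds] [CompleteSpace Ds]
    -- the `AIP_S`-admissible data set
    (P T : X →L[ℂ] X) (E : X →L[ℂ] Y) (N : X →L[ℂ] U)
    (hPpos : P.IsPositive)
    (hStein : P - adjoint T ∘L P ∘L T = adjoint E ∘L E - adjoint N ∘L N)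
    (OET : X → ℂ → Y) (ONT : X → ℂ → U)
    (hOET : ∀ x0 : X, ∀ z ∈ ball (0:ℂ) 1,
      HasSum (fun n : ℕ => z ^ n • E ((T ^ n) x0)) (OET x0 z))
    (hONT : ∀ x0 : X, ∀ z ∈ ball (0:ℂ) 1,
      HasSum (fun n : ℕ => z ^ n • N ((T ^ n) x0)) (ONT x0 z))
    -- the unitary colligation constructed from `{P,T,E,N}`
    (ρ : X →L[ℂ] X0)
    (A : X0 →L[ℂ] X0) (B1 : U →L[ℂ] X0) (B2 : Ds →L[ℂ] X0)
    (C1 : X0 →L[ℂ] Y) (C2 : X0 →L[ℂ] Dt)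
    (D11 : U →L[ℂ] Y) (D12 : Ds →L[ℂ] Y) (D21 : U →L[ℂ] Dt)
    (hcol : IsRedhefferColligation P T E N ρ A B1 B2 C1 C2 D11 D12 D21) :
    -- `Ker D21* = {0}`
    (∀ d : Dt, adjoint D21 d = 0 → d = 0) ∧
    -- `Ker D12 = closure (i_* {[x0;0] : T* P^{1/2} x0 = 0})`
    (∀ d : Ds, D12 d = 0 ↔
      d ∈ closure {d' : Ds |
        D12 d' = 0 ∧ adjoint T (adjoint ρ (B2 d')) = 0}) := by
  constructor
  · -- Ker D21* = {0}
    intro d hd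
    have h1 : ∀ x : X, ⟪adjoint C2 d, ρ x⟫_ℂ = 0 := by
      intro x
      have := hcol.defect d x
      rw [hd] at this
      simpa using this
    have h2 : adjoint C2 d = 0 := by
      have h3 : ∀ w : X0, ⟪adjoint C2 d, w⟫_ℂ = 0 := by
        intro w
        have hcl : IsClosed {w : X0 | ⟪adjoint C2 d, w⟫_ℂ = 0} :=
          isClosed_eq (continuous_const.inner continuous_id) continuous_const
        have : Set.univ ⊆ {w : X0 | ⟪adjoint C2 d, w⟫_ℂ = 0} := by
          rw [← hcl.closure_eq]
          refine hcol.rho_dense.closure_range.symm ▸ closure_mono ?_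
          rintro _ ⟨x, rfl⟩
          exact h1 x
        exact this (Set.mem_univ w)
      simpa [inner_self_eq_zero] using h3 (adjoint C2 d)
    have h4 := hcol.defect_iso d
    rw [hd, h2] at h4
    simp at h4
    have : ‖d‖ = 0 := by nlinarith [norm_nonneg d]
    simpa [norm_eq_zero] using this
  · intro d
    constructor
    · intro hd
      apply subset_closure
      refine ⟨hd, ?_⟩
      have h1 : ∀ x : X, ⟪B2 d, ρ (T x)⟫_ℂ = 0 := by
        intro x
        have := hcol.defect_star d x
        rw [hd] at this
        simpa using this
      have key : ∀ x : X, ⟪adjoint T (adjoint ρ (B2 d)), x⟫_ℂ = 0 := by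
        intro x
        rw [adjoint_inner_left, adjoint_inner_left]
        exact h1 x
      simpa [inner_self_eq_zero] using key (adjoint T (adjoint ρ (B2 d)))
    · intro hd
      have hcl : IsClosed {d' : Ds | D12 d' = 0} :=
        isClosed_eq D12.continuous continuous_const
      exact closure_minimal (fun d' h => h.1 :
        {d' : Ds | D12 d' = 0 ∧ adjoint T (adjoint ρ (B2 d')) = 0} ⊆
          {d' : Ds | D12 d' = 0}) hcl hd

end
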